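/- In two dimensions, with the multiplier m odd (and homogeneous of degree 0, smooth away from the origin, satisfying m(−ξ) = conj(m(ξ)) and ξ·m(ξ) = 0 for ξ ≠ 0), for every smooth mean-zero θ: 𝕋² → ℝ the drift velocity satisfies u^l = T^l[θ] = (∇^⊥ Lθ)^l, where ∇^⊥ = (−∂₂, ∂₁) and L = (−Δ)^{-1/2}(R₂T¹ − R₁T²). Consequently ∫_{𝕋²} θ(x) u^l(x) ∂_l (Lθ)(x) dx = 0, i.e. ∫_{𝕋²} θ (∇^⊥Lθ)·∇(Lθ) dx = 0. -/

import Mathlib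

open MeasureTheory Filter Topology

noncomputable section

/-- The unit cube in `ℝⁿ`, a fundamental domain for the torus `𝕋ⁿ = ℝⁿ/ℤⁿ`. -/
def cube (n : ℕ) : Set (Fin n → ℝ) := Set.univ.pi fun _ => Set.Ico (0 : ℝ) 1

/-- `ℤⁿ`-periodicity of a function on `ℝⁿ`, i.e. the function descends to `𝕋ⁿ`. -/
def ZPer {n : ℕ} {α : Type*} (f : (Fin n → ℝ) → α) : Prop :=
  ∀ (k : Fin n → ℤ) (x : Fin n → ℝ), f (x + fun i => (k i : ℝ)) = f x

/-- Fourier coefficient of a periodic function, w.r.t. the character `e^{2πi k·x}`. -/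
def fcoeff {n : ℕ} (f : (Fin n → ℝ) → ℂ) (k : Fin n → ℤ) : ℂ :=
  ∫ x in cube n, f x * Complex.exp (-(2 * Real.pi * Complex.I * ∑ i, (k i : ℝ) * x i))

/-- `u = T[θ]` where `T` is the Fourier multiplier operator with symbol `m`
(`m` acts on nonzero frequencies; the zero mode of `u` vanishes). -/
def IsDrift {n : ℕ} (m : (Fin n → ℝ) → Fin n → ℂ)
    (θ : (Fin n → ℝ) → ℝ) (u : (Fin n → ℝ) → Fin n → ℝ) : Prop :=
  ∀ (l : Fin n) (k : Fin n → ℤ),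
    fcoeff (fun x => (u x l : ℂ)) k =
      (if k = 0 then 0 else m (fun i => (k i : ℝ)) l) * fcoeff (fun x => (θ x : ℂ)) k

/-- Standing hypotheses on the symbol `m` of the constitutive operator `T`. -/
structure GoodSymbol (n : ℕ) (m : (Fin n → ℝ) → Fin n → ℂ) : Prop where
  homog : ∀ (c : ℝ) (ξ : Fin n → ℝ), 0 < c → ξ ≠ 0 → m (c • ξ) = m ξ
  conj_symm : ∀ ξ : Fin n → ℝ, ξ ≠ 0 → m (-ξ) = star (m ξ)
  div_free : ∀ ξ : Fin n → ℝ, ξ ≠ 0 → (∑ l, (ξ l : ℂ) * m ξ l) = 0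
  smooth : ContDiffOn ℝ (⊤ : ℕ∞) m {ξ | ξ ≠ 0}

/-- The multiplier is odd. -/
def OddSymbol {n : ℕ} (m : (Fin n → ℝ) → Fin n → ℂ) : Prop :=
  ∀ ξ : Fin n → ℝ, ξ ≠ 0 → m (-ξ) = -m ξ

/-- Weak solution of the active scalar equation on `I × 𝕋ⁿ`:
periodicity, the constitutive law `u = T[θ]` (for a.e. time in `I`), and the
distributional form of `∂ₜθ + div(θu) = 0` against smooth periodic test functions
compactly supported in time inside `I`. -/
def WeakSolutionOn {n : ℕ} (I : Set ℝ) (m : (Fin n → ℝ) → Fin n → ℂ)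
    (θ : ℝ → (Fin n → ℝ) → ℝ) (u : ℝ → (Fin n → ℝ) → Fin n → ℝ) : Prop :=
  (∀ t, ZPer (θ t)) ∧ (∀ t, ZPer (u t)) ∧
  (∀ᵐ t ∂(volume.restrict I), IsDrift m (θ t) (u t)) ∧
  ∀ φ : ℝ × (Fin n → ℝ) → ℝ, ContDiff ℝ (⊤ : ℕ∞) φ →
    (∀ (t : ℝ) (k : Fin n → ℤ) (x : Fin n → ℝ), φ (t, x + fun i => (k i : ℝ)) = φ (t, x)) →
    (∃ a b : ℝ, Set.Icc a b ⊆ I ∧ ∀ t x, t ∉ Set.Icc a b → φ (t, x) = 0) →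
    (∫ t : ℝ, ∫ x in cube n,
        (θ t x * fderiv ℝ φ (t, x) (1, 0)
          + θ t x * ∑ l, u t x l * fderiv ℝ φ (t, x) (0, Pi.single l 1))) = 0

/-- Global weak solution (on all of `ℝ × 𝕋ⁿ`). -/
def GlobalWeakSolution {n : ℕ} (m : (Fin n → ℝ) → Fin n → ℂ)
    (θ : ℝ → (Fin n → ℝ) → ℝ) (u : ℝ → (Fin n → ℝ) → Fin n → ℝ) : Prop :=
  WeakSolutionOn Set.univ m θ u

/-- Jointly Hölder continuous of exponent `α` in time and space. -/
def HolderCts {n : ℕ} (α : ℝ) (f : ℝ → (Fin n → ℝ) → ℝ) : Prop :=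
  ∃ C : ℝ, ∀ (t s : ℝ) (x y : Fin n → ℝ), |f t x - f s y| ≤ C * dist (t, x) (s, y) ^ α

/-- vanishing outside `I × 𝕋ⁿ`. -/
def SuppInTime {n : ℕ} {α : Type*} [Zero α] (I : Set ℝ) (f : ℝ → (Fin n → ℝ) → α) : Prop :=
  ∀ t ∉ I, ∀ x, f t x = 0

/-- compact time-support inside `I`. -/
def CptSuppInTime {n : ℕ} {α : Type*} [Zero α] (I : Set ℝ) (f : ℝ → (Fin n → ℝ) → α) : Prop :=
  ∃ a b : ℝ, Set.Icc a b ⊆ I ∧ ∀ t ∉ Set.Icc a b, ∀ x, f t x = 0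

/-- The symbol of `L = (-Δ)^{-1/2}(R₂T¹ - R₁T²)` on the integer frequency lattice
(with the character `e^{2πik·x}`; by degree-0 homogeneity `m(2πk) = m(k)`). -/
def Lsym (m : (Fin 2 → ℝ) → Fin 2 → ℂ) (k : Fin 2 → ℤ) : ℂ :=
  if k = 0 then 0 else
    (Complex.I * (k 1 : ℝ) * m (fun i => (k i : ℝ)) 0
        - Complex.I * (k 0 : ℝ) * m (fun i => (k i : ℝ)) 1) /
      (2 * Real.pi * (((k 0 : ℝ)) ^ 2 + ((k 1 : ℝ)) ^ 2))

/-- `g = L f` in the Fourier multiplier sense. -/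
def IsLOf (m : (Fin 2 → ℝ) → Fin 2 → ℂ) (f g : (Fin 2 → ℝ) → ℝ) : Prop :=
  ∀ k : Fin 2 → ℤ,
    fcoeff (fun x => (g x : ℂ)) k = Lsym m k * fcoeff (fun x => (f x : ℂ)) k

/-- spatial partial derivative `∂_l`. -/
def pd (l : Fin 2) (f : (Fin 2 → ℝ) → ℝ) : (Fin 2 → ℝ) → ℝ :=
  fun x => fderiv ℝ f x (Pi.single l 1)

/-!
In two dimensions the condition `ξ · m(ξ) = 0` forces `m(ξ)` to be a multiple of `ξ^⊥`, and the
symbol of `L` is exactly that multiple divided by `2πi`: on every mode `k`,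
`2πi k₁ (Lθ)^(k) = -(u⁰)^(k)` and `2πi k₀ (Lθ)^(k) = (u¹)^(k)`. Since `∂_l` multiplies Fourier
coefficients by `2πi k_l` (integrate by parts over the unit cube; the boundary terms cancel by
periodicity), `u` and `∇^⊥ Lθ` have the same Fourier coefficients, hence coincide by uniqueness of
Fourier series of continuous functions on the torus. The integrand `θ ∇^⊥(Lθ) · ∇(Lθ)` then
vanishes pointwise.
-/

open UnitAddTorus

section Kernel

variable {n : ℕ}

def fcoeffKernel (k : Fin n → ℤ) (x : Fin n → ℝ) : ℂ :=
  Complex.exp (-(2 * Real.pi * Complex.I * ∑ i, (k i : ℝ) * x i))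

theorem fcoeff_eq_integral_mul_fcoeffKernel (f : (Fin n → ℝ) → ℂ) (k : Fin n → ℤ) :
    fcoeff f k = ∫ x in cube n, f x * fcoeffKernel k x := rfl

theorem zPer_fcoeffKernel (k : Fin n → ℤ) : ZPer (fcoeffKernel k) := by
  intro m x
  have hsum : ∑ i, (k i : ℝ) * (x + fun i => (m i : ℝ)) i
      = ∑ i, (k i : ℝ) * x i + ((∑ i, k i * m i : ℤ) : ℝ) := by
    push_cast
    simp only [Pi.add_apply, mul_add, Finset.sum_add_distrib]
  rw [fcoeffKernel, fcoeffKernel, hsum, Complex.ofReal_add, mul_add, neg_add, Complex.exp_add,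
    Complex.ofReal_intCast, show -(2 * Real.pi * Complex.I * ((∑ i, k i * m i : ℤ) : ℂ))
      = ((-∑ i, k i * m i : ℤ) : ℂ) * (2 * Real.pi * Complex.I) by push_cast; ring,
    Complex.exp_int_mul_two_pi_mul_I, mul_one]

theorem fcoeffKernel_eq_exp_clm (k : Fin n → ℤ) :
    fcoeffKernel k = fun x => Complex.exp (((-(2 * Real.pi * Complex.I)) •
      Complex.ofRealCLM.comp (∑ i, (k i : ℝ) •
        ContinuousLinearMap.proj (R := ℝ) (φ := fun _ : Fin n => ℝ) i)) x) := by
  ext x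
  simp [fcoeffKernel]

theorem contDiff_fcoeffKernel (k : Fin n → ℤ) : ContDiff ℝ ⊤ (fcoeffKernel k) := by
  rw [fcoeffKernel_eq_exp_clm]
  exact (ContinuousLinearMap.contDiff _).cexp

theorem fderiv_fcoeffKernel_single (k : Fin n → ℤ) (x : Fin n → ℝ) (l : Fin n) :
    fderiv ℝ (fcoeffKernel k) x (Pi.single l 1)
      = -(2 * Real.pi * Complex.I * k l) * fcoeffKernel k x := by
  rw [fcoeffKernel_eq_exp_clm, (ContinuousLinearMap.hasFDerivAt _).cexp.fderiv]
  simp [Pi.single_apply]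
  ring

theorem mFourier_neg_coe_eq_fcoeffKernel (k : Fin n → ℤ) (x : Fin n → ℝ) :
    mFourier (-k) (fun i => x i) = fcoeffKernel k x := by
  simp only [fcoeffKernel, Complex.ofReal_sum, Finset.mul_sum, ← Finset.sum_neg_distrib,
    Complex.exp_sum, mFourier, ContinuousMap.coe_mk, Pi.neg_apply, fourier_coe_apply]
  push_cast
  ring_nf

end Kernel

section Uniqueness

variable {n : ℕ}

theorem isOpenQuotientMap_coe_torus :
    IsOpenQuotientMap fun (x : Fin n → ℝ) i => (x i : UnitAddCircle) :=
  IsOpenQuotientMap.piMap fun _ => QuotientAddGroup.isOpenQuotientMap_mk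

theorem ZPer.exists_torus_lift {E : Type*} [TopologicalSpace E] {f : (Fin n → ℝ) → E}
    (hf : Continuous f) (hper : ZPer f) :
    ∃ F : C(UnitAddTorus (Fin n), E), ∀ x, F (fun i => x i) = f x := by
  have hfactor : Function.FactorsThrough f fun (x : Fin n → ℝ) i => (x i : UnitAddCircle) := by
    intro x y hxy
    have hk : ∀ i, ∃ k : ℤ, y i = x i + k := fun i => by
      obtain ⟨k, hk⟩ := AddSubgroup.mem_zmultiples_iff.mp
        (QuotientAddGroup.eq.mp (congrFun hxy i))
      exact ⟨k, by rw [zsmul_one] at hk; linarith⟩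
    choose k hk using hk
    rw [show y = x + fun i => (k i : ℝ) from funext hk, hper]
  let π : C(Fin n → ℝ, UnitAddTorus (Fin n)) :=
    ⟨fun x i => x i, isOpenQuotientMap_coe_torus.continuous⟩
  have hq : Topology.IsQuotientMap π := isOpenQuotientMap_coe_torus.isQuotientMap
  exact ⟨hq.lift ⟨f, hf⟩ hfactor, DFunLike.congr_fun (hq.lift_comp ⟨f, hf⟩ hfactor)⟩

theorem fcoeff_eq_mFourierCoeff (F : C(UnitAddTorus (Fin n), ℂ)) (k : Fin n → ℤ) :
    fcoeff (fun x => F fun i => x i) k = mFourierCoeff F k := by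
  have hbox : {x : Fin n → ℝ | ∀ i, x i ∈ Set.Ioc ((0 : Fin n → ℝ) i) ((0 : Fin n → ℝ) i + 1)}
      = Set.univ.pi fun _ => Set.Ioc 0 1 := by
    ext x
    simp
  have hIco : (Set.univ.pi fun _ : Fin n => Set.Ico (0 : ℝ) 1) =ᵐ[volume] Set.Icc 0 1 :=
    Measure.univ_pi_Ico_ae_eq_Icc
  have hIoc : (Set.univ.pi fun _ : Fin n => Set.Ioc (0 : ℝ) 1) =ᵐ[volume] Set.Icc 0 1 :=
    Measure.univ_pi_Ioc_ae_eq_Icc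
  rw [mFourierCoeff_eq_integral F k 0, hbox, fcoeff_eq_integral_mul_fcoeffKernel, cube,
    setIntegral_congr_set hIco, setIntegral_congr_set hIoc]
  simp_rw [mFourier_neg_coe_eq_fcoeffKernel, smul_eq_mul, mul_comm]

theorem eq_zero_of_fcoeff_eq_zero {f : (Fin n → ℝ) → ℂ} (hf : Continuous f) (hper : ZPer f)
    (h : ∀ k, fcoeff f k = 0) : f = 0 := by
  obtain ⟨F, hF⟩ := hper.exists_torus_lift hf
  have hF_eq : f = fun x => F fun i => x i := funext fun x => (hF x).symm
  have hcoeff : mFourierCoeff F = 0 := funext fun k => by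
    rw [← fcoeff_eq_mFourierCoeff, ← hF_eq, h, Pi.zero_apply]
  funext x
  have hsum := hasSum_mFourier_series_apply_of_summable (f := F)
    (by rw [hcoeff]; exact summable_zero) (fun i => x i)
  simp only [hcoeff, Pi.zero_apply, zero_smul] at hsum
  rw [← hF, Pi.zero_apply, hsum.unique hasSum_zero]

theorem integrableOn_cube {E : Type*} [NormedAddCommGroup E] {f : (Fin n → ℝ) → E}
    (hf : Continuous f) : IntegrableOn f (cube n) :=
  (hf.continuousOn.integrableOn_compact (isCompact_univ_pi fun _ => isCompact_Icc)).mono_set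
    (Set.pi_mono fun _ _ => Set.Ico_subset_Icc_self)

theorem fcoeff_neg (f : (Fin n → ℝ) → ℂ) (k : Fin n → ℤ) : fcoeff (-f) k = -fcoeff f k := by
  simp only [fcoeff, Pi.neg_apply, neg_mul, integral_neg]

theorem fcoeff_sub {f g : (Fin n → ℝ) → ℂ} (hf : Continuous f) (hg : Continuous g)
    (k : Fin n → ℤ) : fcoeff (f - g) k = fcoeff f k - fcoeff g k := by
  simp only [fcoeff, Pi.sub_apply, sub_mul]
  exact integral_sub (integrableOn_cube (by fun_prop)) (integrableOn_cube (by fun_prop))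

theorem eq_of_fcoeff_eq {f g : (Fin n → ℝ) → ℂ} (hf : Continuous f) (hg : Continuous g)
    (hfper : ZPer f) (hgper : ZPer g) (h : ∀ k, fcoeff f k = fcoeff g k) : f = g :=
  sub_eq_zero.mp <| eq_zero_of_fcoeff_eq_zero (hf.sub hg)
    (fun k x => by simp only [Pi.sub_apply, hfper k x, hgper k x])
    (fun k => by rw [fcoeff_sub hf hg, h, sub_self])

theorem eq_of_fcoeff_ofReal_eq {f g : (Fin n → ℝ) → ℝ} (hf : Continuous f) (hg : Continuous g)
    (hfper : ZPer f) (hgper : ZPer g)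
    (h : ∀ k, fcoeff (fun x => (f x : ℂ)) k = fcoeff (fun x => (g x : ℂ)) k) : f = g := by
  have := eq_of_fcoeff_eq (by fun_prop) (by fun_prop) (fun k x => by simp only [hfper k x])
    (fun k x => by simp only [hgper k x]) h
  exact funext fun x => Complex.ofReal_injective (congrFun this x)

end Uniqueness

section Derivatives

variable {n : ℕ}

/- The divergence theorem for the field `g • e_l` on `[0, 1]ⁿ⁺¹`: the two faces `x_l = 0` and
`x_l = 1` differ by the period `e_l`, so their contributions cancel. -/
theorem ZPer.integral_cube_fderiv_eq_zero {E : Type*} [NormedAddCommGroup E] [NormedSpace ℝ E]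
    [CompleteSpace E] {g : (Fin (n + 1) → ℝ) → E} (hg : ContDiff ℝ 1 g) (hper : ZPer g)
    (l : Fin (n + 1)) : ∫ x in cube (n + 1), fderiv ℝ g x (Pi.single l 1) = 0 := by
  have hcube : cube (n + 1) =ᵐ[volume] Set.Icc 0 1 := Measure.univ_pi_Ico_ae_eq_Icc
  let F' : Fin (n + 1) → (Fin (n + 1) → ℝ) → (Fin (n + 1) → ℝ) →L[ℝ] E :=
    Pi.single l (fderiv ℝ g)
  have hsum : ∀ x, ∑ i, F' i x (Pi.single i 1) = fderiv ℝ g x (Pi.single l 1) := fun x => by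
    rw [Finset.sum_eq_single l (fun i _ hi => by simp [F', Pi.single_eq_of_ne hi]) (by simp)]
    simp [F']
  have hdiv := integral_divergence_of_hasFDerivAt_off_countable' 0 1 zero_le_one
    (Pi.single l g) F' ∅ Set.countable_empty
    (fun i => by
      rcases eq_or_ne i l with rfl | hi
      · simpa using hg.continuous.continuousOn
      · rw [Pi.single_eq_of_ne hi]
        exact continuousOn_const)
    (fun x _ i => by
      rcases eq_or_ne i l with rfl | hi
      · simpa [F'] using (hg.differentiable one_ne_zero x).hasFDerivAt
      · simp only [F', Pi.single_eq_of_ne hi]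
        exact hasFDerivAt_const (0 : E) x)
    (by simp_rw [hsum]; exact ((hg.continuous_fderiv one_ne_zero).clm_apply
      continuous_const).continuousOn.integrableOn_compact isCompact_Icc)
  simp_rw [hsum] at hdiv
  rw [setIntegral_congr_set hcube, hdiv]
  refine Finset.sum_eq_zero fun i _ => sub_eq_zero.mpr ?_
  rcases eq_or_ne i l with rfl | hi
  · refine setIntegral_congr_fun measurableSet_Icc fun y _ => ?_
    have hshift : i.insertNth (1 : ℝ) y
        = i.insertNth 0 y + fun j => (((Pi.single i 1 : Fin (n + 1) → ℤ) j : ℤ) : ℝ) := by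
      ext j
      induction j using Fin.succAboveCases i <;> simp
    simp only [Pi.single_eq_same, Pi.one_apply, Pi.zero_apply, hshift]
    exact hper _ _
  · simp [Pi.single_eq_of_ne hi]

theorem fcoeff_fderiv_single {f : (Fin (n + 1) → ℝ) → ℂ} (hf : ContDiff ℝ 1 f)
    (hper : ZPer f) (l : Fin (n + 1)) (k : Fin (n + 1) → ℤ) :
    fcoeff (fun x => fderiv ℝ f x (Pi.single l 1)) k
      = 2 * Real.pi * Complex.I * k l * fcoeff f k := by
  have hK := contDiff_fcoeffKernel k
  have hfK : ContDiff ℝ 1 (f * fcoeffKernel k) := hf.mul (hK.of_le le_top)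
  have hleibniz : ∀ x, fderiv ℝ (f * fcoeffKernel k) x (Pi.single l 1)
      = fderiv ℝ f x (Pi.single l 1) * fcoeffKernel k x
        - 2 * Real.pi * Complex.I * k l * (f x * fcoeffKernel k x) := fun x => by
    rw [fderiv_mul (hf.differentiable one_ne_zero x) (hK.differentiable (by simp) x)]
    simp only [add_apply, smul_apply, smul_eq_mul, fderiv_fcoeffKernel_single]
    ring
  have hzero := ZPer.integral_cube_fderiv_eq_zero hfK
    (fun m x => by simp only [Pi.mul_apply, hper m x, zPer_fcoeffKernel k m x]) l
  simp_rw [hleibniz] at hzero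
  rw [integral_sub (integrableOn_cube (by fun_prop)) (integrableOn_cube (by fun_prop)),
    integral_const_mul, sub_eq_zero] at hzero
  rw [fcoeff_eq_integral_mul_fcoeffKernel, fcoeff_eq_integral_mul_fcoeffKernel, hzero]

theorem fcoeff_pd {f : (Fin 2 → ℝ) → ℝ} (hf : ContDiff ℝ 1 f) (hper : ZPer f) (l : Fin 2)
    (k : Fin 2 → ℤ) :
    fcoeff (fun x => (pd l f x : ℂ)) k
      = 2 * Real.pi * Complex.I * k l * fcoeff (fun x => (f x : ℂ)) k := by
  have hderiv : ∀ x, fderiv ℝ (fun y => (f y : ℂ)) x (Pi.single l 1) = pd l f x := fun x => by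
    change fderiv ℝ (Complex.ofRealCLM ∘ f) x _ = _
    rw [(Complex.ofRealCLM.hasFDerivAt.comp x
      (hf.differentiable one_ne_zero x).hasFDerivAt).fderiv]
    rfl
  have hcd : ContDiff ℝ 1 fun y => (f y : ℂ) := Complex.ofRealCLM.contDiff.comp hf
  rw [← fcoeff_fderiv_single hcd (fun m x => congrArg _ (hper m x)) l k]
  simp_rw [hderiv]

theorem ZPer.fderiv {E : Type*} [NormedAddCommGroup E] [NormedSpace ℝ E]
    {f : (Fin n → ℝ) → E} (hper : ZPer f) : ZPer (fderiv ℝ f) := fun k x => by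
  rw [← fderiv_comp_add_right, funext (hper k)]

end Derivatives

theorem two_pi_I_mul_Lsym {m : (Fin 2 → ℝ) → Fin 2 → ℂ}
    (hdiv : ∀ ξ : Fin 2 → ℝ, ξ ≠ 0 → (∑ l, (ξ l : ℂ) * m ξ l) = 0) (k : Fin 2 → ℤ) :
    2 * Real.pi * Complex.I * k 0 * Lsym m k = (if k = 0 then 0 else m (fun i => (k i : ℝ)) 1) ∧
    2 * Real.pi * Complex.I * k 1 * Lsym m k
      = -(if k = 0 then 0 else m (fun i => (k i : ℝ)) 0) := by
  rcases eq_or_ne k 0 with rfl | hk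
  · simp [Lsym]
  have hξ : (fun i => (k i : ℝ)) ≠ 0 := fun h => hk (funext fun i => by simpa using congrFun h i)
  have hnorm : ((k 0 ^ 2 + k 1 ^ 2 : ℤ) : ℂ) ≠ 0 := by
    refine Int.cast_ne_zero.mpr fun h => hk ?_
    have h0 : k 0 = 0 := by nlinarith [sq_nonneg (k 0), sq_nonneg (k 1)]
    have h1 : k 1 = 0 := by nlinarith [sq_nonneg (k 0), sq_nonneg (k 1)]
    ext i
    fin_cases i <;> simp [h0, h1]
  have hdiv' := hdiv _ hξ
  rw [Fin.sum_univ_two] at hdiv'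
  simp only [Lsym, if_neg hk]
  set m0 := m (fun i => (k i : ℝ)) 0
  set m1 := m (fun i => (k i : ℝ)) 1
  push_cast at hdiv' hnorm ⊢
  constructor <;> field_simp
  · linear_combination (-(k 1 : ℂ)) * hdiv' + (k 0 * k 1 * m0 - k 0 ^ 2 * m1) * Complex.I_sq
  · linear_combination (k 0 : ℂ) * hdiv' + (k 1 ^ 2 * m0 - k 0 * k 1 * m1) * Complex.I_sq

theorem fcoeff_pd_zero_of_isLOf {m : (Fin 2 → ℝ) → Fin 2 → ℂ}
    (hdiv : ∀ ξ : Fin 2 → ℝ, ξ ≠ 0 → (∑ l, (ξ l : ℂ) * m ξ l) = 0) {θ Lθ : (Fin 2 → ℝ) → ℝ}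
    (hLθ : ContDiff ℝ 1 Lθ) (hLθper : ZPer Lθ) (hLθdef : IsLOf m θ Lθ) (k : Fin 2 → ℤ) :
    fcoeff (fun x => (pd 0 Lθ x : ℂ)) k
      = (if k = 0 then 0 else m (fun i => (k i : ℝ)) 1) * fcoeff (fun x => (θ x : ℂ)) k := by
  rw [fcoeff_pd hLθ hLθper, hLθdef, ← mul_assoc, (two_pi_I_mul_Lsym hdiv k).1]

theorem fcoeff_neg_pd_one_of_isLOf {m : (Fin 2 → ℝ) → Fin 2 → ℂ}
    (hdiv : ∀ ξ : Fin 2 → ℝ, ξ ≠ 0 → (∑ l, (ξ l : ℂ) * m ξ l) = 0) {θ Lθ : (Fin 2 → ℝ) → ℝ}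
    (hLθ : ContDiff ℝ 1 Lθ) (hLθper : ZPer Lθ) (hLθdef : IsLOf m θ Lθ) (k : Fin 2 → ℤ) :
    fcoeff (fun x => ((-pd 1 Lθ x : ℝ) : ℂ)) k
      = (if k = 0 then 0 else m (fun i => (k i : ℝ)) 0) * fcoeff (fun x => (θ x : ℂ)) k := by
  rw [show (fun x => ((-pd 1 Lθ x : ℝ) : ℂ)) = -fun x => (pd 1 Lθ x : ℂ) by ext; push_cast; rfl,
    fcoeff_neg, fcoeff_pd hLθ hLθper, hLθdef, ← mul_assoc, (two_pi_I_mul_Lsym hdiv k).2, neg_mul,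
    neg_neg]

theorem odd_symbol_drift_is_perp_gradient_general
    (m : (Fin 2 → ℝ) → Fin 2 → ℂ) (hm : GoodSymbol 2 m)
    (θ : (Fin 2 → ℝ) → ℝ)
    (u : (Fin 2 → ℝ) → Fin 2 → ℝ) (hu : Continuous u) (huper : ZPer u)
    (hdrift : IsDrift m θ u)
    (Lθ : (Fin 2 → ℝ) → ℝ) (hLθ : ContDiff ℝ (⊤ : ℕ∞) Lθ) (hLθper : ZPer Lθ)
    (hLθdef : IsLOf m θ Lθ) :
    (∀ x, u x 0 = -(pd 1 Lθ x) ∧ u x 1 = pd 0 Lθ x) ∧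
    (∫ x in cube 2, θ x * ∑ l, u x l * pd l Lθ x) = 0 := by
  have hLθ1 : ContDiff ℝ 1 Lθ := hLθ.of_le (by exact_mod_cast le_top)
  have hpd_cont : ∀ l, Continuous (pd l Lθ) := fun l =>
    (hLθ1.continuous_fderiv one_ne_zero).clm_apply continuous_const
  have hpd_per : ∀ l, ZPer (pd l Lθ) := fun l k x => by simp only [pd, hLθper.fderiv k x]
  have hu_per : ∀ l, ZPer fun x => u x l := fun l k x => congrFun (huper k x) l
  have hu0 : (fun x => u x 0) = fun x => -pd 1 Lθ x :=
    eq_of_fcoeff_ofReal_eq (by fun_prop) (hpd_cont 1).neg (hu_per 0)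
      (fun k x => by simp only [hpd_per 1 k x]) fun k =>
        (hdrift 0 k).trans (fcoeff_neg_pd_one_of_isLOf hm.div_free hLθ1 hLθper hLθdef k).symm
  have hu1 : (fun x => u x 1) = pd 0 Lθ :=
    eq_of_fcoeff_ofReal_eq (by fun_prop) (hpd_cont 0) (hu_per 1) (hpd_per 0) fun k =>
      (hdrift 1 k).trans (fcoeff_pd_zero_of_isLOf hm.div_free hLθ1 hLθper hLθdef k).symm
  have hintegrand : ∀ x, θ x * ∑ l, u x l * pd l Lθ x = 0 := fun x => by
    rw [Fin.sum_univ_two, congrFun hu0 x, congrFun hu1 x]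
    ring
  exact ⟨fun x => ⟨congrFun hu0 x, congrFun hu1 x⟩, by simp only [hintegrand, integral_zero]⟩

/-- for an odd multiplier in 2D and a smooth mean-zero `θ`, the drift
velocity satisfies `u = ∇^⊥ Lθ`, and consequently `∫ θ u·∇(Lθ) dx =
∫ θ ∇^⊥(Lθ)·∇(Lθ) dx = 0`. -/
theorem odd_symbol_drift_is_perp_gradient
    (m : (Fin 2 → ℝ) → Fin 2 → ℂ) (hm : GoodSymbol 2 m) (hodd : OddSymbol m)
    (θ : (Fin 2 → ℝ) → ℝ) (hθ : ContDiff ℝ (⊤ : ℕ∞) θ) (hθper : ZPer θ)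
    (hθmean : (∫ x in cube 2, θ x) = 0)
    (u : (Fin 2 → ℝ) → Fin 2 → ℝ) (hu : Continuous u) (huper : ZPer u)
    (hdrift : IsDrift m θ u)
    (Lθ : (Fin 2 → ℝ) → ℝ) (hLθ : ContDiff ℝ (⊤ : ℕ∞) Lθ) (hLθper : ZPer Lθ)
    (hLθdef : IsLOf m θ Lθ) :
    (∀ x, u x 0 = -(pd 1 Lθ x) ∧ u x 1 = pd 0 Lθ x) ∧
    (∫ x in cube 2, θ x * ∑ l, u x l * pd l Lθ x) = 0 :=
  odd_symbol_drift_is_perp_gradient_general m hm θ u hu huper hdrift Lθ hLθ hLθper hLθdef
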